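/- Let F be a field and u, h ∈ F with u ≠ 0 and u + h ≠ 0. Let S₊ = [[−u, −h], [0, u−h]] and S₋ = [[−u−h, 0], [−h, u]] be 2×2 matrices over F. Then S₋ is invertible and S₋⁻¹ · S₊ = (u+h)⁻¹ · [[u, h], [h, u]]. -/
import Mathlib


open Matrix

/-- The geometric R-matrix for `X = T*ℙ¹` : in the fixed-point basis, the stable envelope
matrices `S₊ = Stab_{C₊}` and `S₋ = Stab_{C₋}` satisfy
`S₋⁻¹ · S₊ = 1/(u+h) · [[u,h],[h,u]]`, the Yang R-matrix. -/
theorem stable_envelope_ratio_is_yang (F : Type*) [Field F] (u h : F)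
    (hu : u ≠ 0) (huh : u + h ≠ 0) :
    IsUnit (!![-u - h, 0; -h, u] : Matrix (Fin 2) (Fin 2) F) ∧
      (!![-u - h, 0; -h, u] : Matrix (Fin 2) (Fin 2) F)⁻¹ * !![-u, -h; 0, u - h] =
        (u + h)⁻¹ • !![u, h; h, u] := by
  have hdet : (!![-u - h, 0; -h, u] : Matrix (Fin 2) (Fin 2) F).det ≠ 0 := by
    simp [Matrix.det_fin_two_of]
    constructor
    · intro hc; exact huh (by linear_combination -hc)
    · exact hu
  have hunit : IsUnit (!![-u - h, 0; -h, u] : Matrix (Fin 2) (Fin 2) F) :=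
    (Matrix.isUnit_iff_isUnit_det _).mpr (isUnit_iff_ne_zero.mpr hdet)
  refine ⟨hunit, ?_⟩
  have := hunit.invertible
  rw [Matrix.inv_mul_eq_iff_eq_mul_of_invertible]
  ext i j
  fin_cases i <;> fin_cases j <;>
    simp [Matrix.mul_apply, Fin.sum_univ_two] <;> field_simp <;> ring
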